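/- There exists a constant C ≥ 0 such that for every absolutely continuous function f : [-1,0] → ℂ with derivative f' ∈ L²(-1,0), every g ∈ L²(-1,0), every real s ≠ 0 and every ξ ∈ [-1,0], one has |∫_{-1}^{ξ} cos(s(ξ−r))·(i·s·f(r) + g(r)) dr| ≤ C·‖f‖_{H¹} + ‖g‖_{L²(-1,0)}. -/

import Mathlib

open MeasureTheory

/-- The `L²` norm of `f` on the interval `(a, b)`. -/
noncomputable def L2norm (a b : ℝ) (f : ℝ → ℂ) : ℝ :=
  Real.sqrt (∫ x in a..b, ‖f x‖ ^ 2)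

/-- The `H¹(-1,0)` norm of an absolutely continuous function `f` with derivative `f'`. -/
noncomputable def H1norm (f f' : ℝ → ℂ) : ℝ :=
  Real.sqrt ((∫ x in (-1:ℝ)..0, ‖f x‖ ^ 2) + (∫ x in (-1:ℝ)..0, ‖f' x‖ ^ 2))

/-! Substituting `f r = f (-1) + ∫_{-1}^r f'` and swapping the order of integration gives
the integration by parts
`s ∫_{-1}^ξ cos (s(ξ-r)) f r dr = f (-1) sin (s(ξ+1)) + ∫_{-1}^ξ sin (s(ξ-t)) f' t dt`,
in which the factor `s` is absorbed by the kernel. So the `f`-term is at most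
`|f (-1)| + ‖f'‖_{L¹}`, while `|f (-1)| ≤ ‖f‖_{L¹} + ‖f'‖_{L¹}` on the unit interval, and the
`g`-term is at most `‖g‖_{L¹}`. On an interval of length one, `‖·‖_{L¹} ≤ ‖·‖_{L²}` by
Cauchy–Schwarz, which gives the estimate with `C = 3`. -/

open Set

theorem integral_mul_primitive_eq_integral_tail_mul {𝕜 : Type*} [RCLike 𝕜] {a b : ℝ}
    (hab : a ≤ b) {k φ : ℝ → 𝕜} (hk : IntervalIntegrable k volume a b)
    (hφ : IntervalIntegrable φ volume a b) :
    ∫ r in a..b, k r * ∫ t in a..r, φ t = ∫ t in a..b, (∫ r in t..b, k r) * φ t := by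
  set μ := volume.restrict (Ioc a b)
  let K : ℝ × ℝ → 𝕜 := {p | p.2 ≤ p.1}.indicator fun p => k p.1 * φ p.2
  have hK : Integrable K (μ.prod μ) :=
    (hk.1.mul_prod hφ.1).indicator (measurableSet_le measurable_snd measurable_fst)
  have inner_t : ∀ r ∈ Ioc a b, ∫ t, K (r, t) ∂μ = k r * ∫ t in a..r, φ t := by
    intro r hr
    have : (fun t => K (r, t)) = (Iic r).indicator fun t => k r * φ t := by
      ext t; simp [K, indicator]
    rw [this, setIntegral_indicator measurableSet_Iic, Ioc_inter_Iic, inf_eq_right.2 hr.2,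
      integral_const_mul, intervalIntegral.integral_of_le hr.1.le]
  have inner_r : ∀ t ∈ Ioc a b, ∫ r, K (r, t) ∂μ = (∫ r in t..b, k r) * φ t := by
    intro t ht
    have : (fun r => K (r, t)) = fun r => (Ici t).indicator k r * φ t := by
      ext r; by_cases h : t ≤ r <;> simp [K, h]
    have hslice : Ioc a b ∩ Ici t = Icc t b := by
      ext r; simp only [mem_inter_iff, mem_Ioc, mem_Ici, mem_Icc]
      constructor
      · rintro ⟨⟨-, hrb⟩, htr⟩; exact ⟨htr, hrb⟩
      · rintro ⟨htr, hrb⟩; exact ⟨⟨ht.1.trans_le htr, hrb⟩, htr⟩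
    rw [this, integral_mul_const, setIntegral_indicator measurableSet_Ici, hslice,
      integral_Icc_eq_integral_Ioc, intervalIntegral.integral_of_le ht.2]
  rw [intervalIntegral.integral_of_le hab, intervalIntegral.integral_of_le hab,
    ← setIntegral_congr_fun measurableSet_Ioc inner_t,
    ← setIntegral_congr_fun measurableSet_Ioc inner_r]
  exact integral_integral_swap hK

theorem norm_integral_mul_le_integral_norm {𝕜 : Type*} [RCLike 𝕜] {a b : ℝ} (hab : a ≤ b)
    {k φ : ℝ → 𝕜} (hk : ∀ r, ‖k r‖ ≤ 1) (hφ : IntervalIntegrable φ volume a b) :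
    ‖∫ r in a..b, k r * φ r‖ ≤ ∫ r in a..b, ‖φ r‖ :=
  intervalIntegral.norm_integral_le_of_norm_le hab
    (ae_of_all _ fun r _ => (norm_mul_le _ _).trans (mul_le_of_le_one_left (norm_nonneg _) (hk r)))
    hφ.norm

section Primitive

variable {E : Type*} [NormedAddCommGroup E] [NormedSpace ℝ E] {f f' : ℝ → E} {a b : ℝ}

theorem continuousOn_of_eq_add_integral (hf : ∀ x ∈ Icc a b, f x = f a + ∫ t in a..x, f' t)
    (hf' : IntervalIntegrable f' volume a b) : ContinuousOn f (Icc a b) :=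
  (continuousOn_const.add ((intervalIntegral.continuousOn_primitive_interval' hf'
    left_mem_uIcc).mono Icc_subset_uIcc)).congr hf

theorem mul_norm_le_integral_norm_add_mul_integral_norm (hab : a ≤ b)
    (hf : ∀ x ∈ Icc a b, f x = f a + ∫ t in a..x, f' t) (hfi : IntervalIntegrable f volume a b)
    (hf' : IntervalIntegrable f' volume a b) :
    (b - a) * ‖f a‖ ≤ (∫ x in a..b, ‖f x‖) + (b - a) * ∫ t in a..b, ‖f' t‖ := by
  have pointwise : ∀ x ∈ Icc a b, ‖f a‖ ≤ ‖f x‖ + ∫ t in a..b, ‖f' t‖ := fun x hx =>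
    calc ‖f a‖ = ‖f x - ∫ t in a..x, f' t‖ := by rw [hf x hx, add_sub_cancel_right]
      _ ≤ ‖f x‖ + ‖∫ t in a..x, f' t‖ := norm_sub_le _ _
      _ ≤ ‖f x‖ + ∫ t in a..b, ‖f' t‖ := by
        gcongr
        exact (intervalIntegral.norm_integral_le_integral_norm hx.1).trans
          (intervalIntegral.integral_mono_interval le_rfl hx.1 hx.2
            (ae_of_all _ fun _ => norm_nonneg _) hf'.norm)
  calc (b - a) * ‖f a‖ = ∫ _ in a..b, ‖f a‖ := by simp
    _ ≤ ∫ x in a..b, (‖f x‖ + ∫ t in a..b, ‖f' t‖) :=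
      intervalIntegral.integral_mono_on hab intervalIntegrable_const
        (hfi.norm.add intervalIntegrable_const) pointwise
    _ = (∫ x in a..b, ‖f x‖) + (b - a) * ∫ t in a..b, ‖f' t‖ := by
      rw [intervalIntegral.integral_add hfi.norm intervalIntegrable_const]; simp

end Primitive

theorem ContinuousOn.memLp_restrict_of_isCompact {X E : Type*} [TopologicalSpace X]
    [MeasurableSpace X] [OpensMeasurableSpace X] [T2Space X] [SecondCountableTopology X]
    [NormedAddCommGroup E] {μ : Measure X} [IsFiniteMeasureOnCompacts μ] {s : Set X}
    {f : X → E} (hs : IsCompact s) (hf : ContinuousOn f s) (p : ENNReal) :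
    MemLp f p (μ.restrict s) := by
  have : IsFiniteMeasure (μ.restrict s) := isFiniteMeasure_restrict.2 hs.measure_lt_top.ne
  obtain ⟨C, hC⟩ := hs.exists_bound_of_continuousOn hf
  exact MemLp.of_bound (hf.aestronglyMeasurable hs.measurableSet) C
    ((ae_restrict_iff' hs.measurableSet).2 (ae_of_all _ hC))

theorem integral_norm_le_sqrt_measureReal_mul_sqrt_integral_sq {α E : Type*} [MeasurableSpace α]
    [NormedAddCommGroup E] {μ : Measure α} [IsFiniteMeasure μ] {h : α → E} (hh : MemLp h 2 μ) :
    ∫ x, ‖h x‖ ∂μ ≤ √(μ.real univ) * √(∫ x, ‖h x‖ ^ 2 ∂μ) := by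
  have holder := integral_mul_le_Lp_mul_Lq_of_nonneg Real.HolderConjugate.two_two
    (ae_of_all _ fun _ => zero_le_one) (ae_of_all _ fun x => norm_nonneg (h x))
    (memLp_const (1 : ℝ)) (by simpa using hh.norm)
  simpa [Real.sqrt_eq_rpow] using holder

theorem integral_norm_le_L2norm {a b : ℝ} (hab : a ≤ b) (hba : b - a ≤ 1) {h : ℝ → ℂ}
    (hh : MemLp h 2 (volume.restrict (Ioc a b))) : ∫ x in a..b, ‖h x‖ ≤ L2norm a b h := by
  have hvol : √((volume.restrict (Ioc a b)).real univ) ≤ 1 := by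
    simpa [hab] using hba
  rw [L2norm, intervalIntegral.integral_of_le hab, intervalIntegral.integral_of_le hab]
  exact (integral_norm_le_sqrt_measureReal_mul_sqrt_integral_sq hh).trans
    (mul_le_of_le_one_left (Real.sqrt_nonneg _) hvol)

theorem L2norm_le_H1norm (f f' : ℝ → ℂ) : L2norm (-1) 0 f ≤ H1norm f f' :=
  Real.sqrt_le_sqrt (le_add_of_nonneg_right
    (intervalIntegral.integral_nonneg (by norm_num) fun _ _ => by positivity))

theorem L2norm_deriv_le_H1norm (f f' : ℝ → ℂ) : L2norm (-1) 0 f' ≤ H1norm f f' :=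
  Real.sqrt_le_sqrt (le_add_of_nonneg_left
    (intervalIntegral.integral_nonneg (by norm_num) fun _ _ => by positivity))

theorem MeasureTheory.MemLp.intervalIntegrable {E : Type*} [NormedAddCommGroup E] {f : ℝ → E}
    {a b : ℝ} (hab : a ≤ b) (hf : MemLp f 2 (volume.restrict (Ioc a b))) :
    IntervalIntegrable f volume a b :=
  (intervalIntegrable_iff_integrableOn_Ioc_of_le hab).2 (hf.integrable one_le_two)

theorem Complex.norm_cos_ofReal_le_one (x : ℝ) : ‖Complex.cos x‖ ≤ 1 := by
  rw [← Complex.ofReal_cos, Complex.norm_real, Real.norm_eq_abs]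
  exact Real.abs_cos_le_one x

theorem Complex.norm_sin_ofReal_le_one (x : ℝ) : ‖Complex.sin x‖ ≤ 1 := by
  rw [← Complex.ofReal_sin, Complex.norm_real, Real.norm_eq_abs]
  exact Real.abs_sin_le_one x

theorem integral_ofReal_mul_cos_sub (s ξ t : ℝ) :
    ∫ r in t..ξ, (s : ℂ) * Complex.cos (s * (ξ - r)) = Complex.sin (s * (ξ - t)) := by
  have hderiv : ∀ r : ℝ, HasDerivAt (fun r : ℝ => -Complex.sin (s * (ξ - r)))
      ((s : ℂ) * Complex.cos (s * (ξ - r))) r := by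
    intro r
    have h : HasDerivAt (fun z : ℂ => -Complex.sin (s * (ξ - z)))
        ((s : ℂ) * Complex.cos (s * (ξ - r))) r :=
      (((hasDerivAt_id' (r : ℂ)).const_sub (ξ : ℂ)).const_mul (s : ℂ)).csin.fun_neg.congr_deriv
        (by ring)
    exact h.comp_ofReal
  rw [intervalIntegral.integral_eq_sub_of_hasDerivAt (fun r _ => hderiv r)
    (by apply Continuous.intervalIntegrable; fun_prop)]
  simp

theorem norm_integral_ofReal_mul_cos_mul_le {f f' : ℝ → ℂ} {a ξ : ℝ} (haξ : a ≤ ξ)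
    (hf : ∀ x ∈ Icc a ξ, f x = f a + ∫ t in a..x, f' t) (hf' : IntervalIntegrable f' volume a ξ)
    (s : ℝ) :
    ‖∫ r in a..ξ, s * Complex.cos (s * (ξ - r)) * f r‖ ≤ ‖f a‖ + ∫ t in a..ξ, ‖f' t‖ := by
  set k : ℝ → ℂ := fun r => s * Complex.cos (s * (ξ - r))
  have hk : Continuous k := by fun_prop
  have hprim : ContinuousOn (fun r => ∫ t in a..r, f' t) (uIcc a ξ) :=
    intervalIntegral.continuousOn_primitive_interval' hf' left_mem_uIcc
  have by_parts : ∫ r in a..ξ, k r * f r =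
      f a * Complex.sin (s * (ξ - a)) + ∫ t in a..ξ, Complex.sin (s * (ξ - t)) * f' t := by
    calc ∫ r in a..ξ, k r * f r = ∫ r in a..ξ, (f a * k r + k r * ∫ t in a..r, f' t) :=
          intervalIntegral.integral_congr fun r hr => by
            rw [hf r (uIcc_of_le haξ ▸ hr)]; ring
      _ = f a * (∫ r in a..ξ, k r) + ∫ r in a..ξ, k r * ∫ t in a..r, f' t := by
          rw [intervalIntegral.integral_add ((hk.intervalIntegrable a ξ).const_mul _)
            (hk.continuousOn.fun_mul hprim).intervalIntegrable, intervalIntegral.integral_const_mul]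
      _ = _ := by
          simp_rw [integral_mul_primitive_eq_integral_tail_mul haξ (hk.intervalIntegrable a ξ) hf',
            k, integral_ofReal_mul_cos_sub]
  rw [by_parts]
  refine (norm_add_le _ _).trans (add_le_add ?_ (norm_integral_mul_le_integral_norm haξ
    (fun t => by exact_mod_cast Complex.norm_sin_ofReal_le_one (s * (ξ - t))) hf'))
  rw [norm_mul]
  exact mul_le_of_le_one_right (norm_nonneg _) (by exact_mod_cast Complex.norm_sin_ofReal_le_one _)

theorem norm_integral_ofReal_mul_cos_mul_le_H1norm {f f' : ℝ → ℂ}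
    (hf : ∀ x ∈ Icc (-1 : ℝ) 0, f x = f (-1) + ∫ t in (-1 : ℝ)..x, f' t)
    (hf' : MemLp f' 2 (volume.restrict (Ioc (-1 : ℝ) 0))) (s : ℝ) {ξ : ℝ}
    (hξ : ξ ∈ Icc (-1 : ℝ) 0) :
    ‖∫ r in (-1 : ℝ)..ξ, s * Complex.cos (s * (ξ - r)) * f r‖ ≤ 3 * H1norm f f' := by
  have hf'i := hf'.intervalIntegrable (by norm_num)
  have hfc := continuousOn_of_eq_add_integral hf hf'i
  have hfL2 : MemLp f 2 (volume.restrict (Ioc (-1 : ℝ) 0)) :=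
    (hfc.memLp_restrict_of_isCompact isCompact_Icc 2).mono_measure
      (Measure.restrict_mono Ioc_subset_Icc_self le_rfl)
  have hf_endpoint : ‖f (-1)‖ ≤ (∫ x in (-1 : ℝ)..0, ‖f x‖) + ∫ t in (-1 : ℝ)..0, ‖f' t‖ := by
    simpa using mul_norm_le_integral_norm_add_mul_integral_norm (by norm_num) hf
      (hfc.intervalIntegrable_of_Icc (by norm_num)) hf'i
  have hf'_tail : ∫ t in (-1 : ℝ)..ξ, ‖f' t‖ ≤ ∫ t in (-1 : ℝ)..0, ‖f' t‖ :=
    intervalIntegral.integral_mono_interval le_rfl hξ.1 hξ.2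
      (ae_of_all _ fun _ => norm_nonneg _) hf'i.norm
  have hf_L1 := integral_norm_le_L2norm (by norm_num) (by norm_num) hfL2
  have hf'_L1 := integral_norm_le_L2norm (by norm_num) (by norm_num) hf'
  calc ‖∫ r in (-1 : ℝ)..ξ, s * Complex.cos (s * (ξ - r)) * f r‖
      ≤ ‖f (-1)‖ + ∫ t in (-1 : ℝ)..ξ, ‖f' t‖ :=
        norm_integral_ofReal_mul_cos_mul_le hξ.1 (fun x hx => hf x ⟨hx.1, hx.2.trans hξ.2⟩)
          (hf'i.mono_set (uIcc_subset_uIcc_left (mem_uIcc_of_le hξ.1 hξ.2))) s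
    _ ≤ 3 * H1norm f f' := by linarith [L2norm_le_H1norm f f', L2norm_deriv_le_H1norm f f']

theorem norm_integral_cos_mul_le_L2norm {g : ℝ → ℂ} {a b ξ : ℝ} (hba : b - a ≤ 1)
    (hξ : ξ ∈ Icc a b) (hg : MemLp g 2 (volume.restrict (Ioc a b))) (s : ℝ) :
    ‖∫ r in a..ξ, Complex.cos (s * (ξ - r)) * g r‖ ≤ L2norm a b g := by
  have hab : a ≤ b := hξ.1.trans hξ.2
  have hgi := hg.intervalIntegrable hab
  calc ‖∫ r in a..ξ, Complex.cos (s * (ξ - r)) * g r‖ ≤ ∫ r in a..ξ, ‖g r‖ :=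
        norm_integral_mul_le_integral_norm hξ.1
          (fun r => by exact_mod_cast Complex.norm_cos_ofReal_le_one (s * (ξ - r)))
          (hgi.mono_set (uIcc_subset_uIcc_left (mem_uIcc_of_le hξ.1 hξ.2)))
    _ ≤ ∫ r in a..b, ‖g r‖ := intervalIntegral.integral_mono_interval le_rfl hξ.1 hξ.2
        (ae_of_all _ fun _ => norm_nonneg _) hgi.norm
    _ ≤ L2norm a b g := integral_norm_le_L2norm hab hba hg

theorem integral_cos_mul_I_mul_add {f g : ℝ → ℂ} {a ξ : ℝ}
    (hf : IntervalIntegrable f volume a ξ) (hg : IntervalIntegrable g volume a ξ) (s : ℝ) :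
    ∫ r in a..ξ, Complex.cos (s * (ξ - r)) * (Complex.I * s * f r + g r) =
      Complex.I * (∫ r in a..ξ, s * Complex.cos (s * (ξ - r)) * f r) +
        ∫ r in a..ξ, Complex.cos (s * (ξ - r)) * g r := by
  have hk : Continuous fun r : ℝ => (s : ℂ) * Complex.cos (s * (ξ - r)) := by fun_prop
  have hcos : Continuous fun r : ℝ => Complex.cos (s * (ξ - r)) := by fun_prop
  rw [← intervalIntegral.integral_const_mul, ← intervalIntegral.integral_add
    ((hf.continuousOn_mul hk.continuousOn).const_mul _) (hg.continuousOn_mul hcos.continuousOn)]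
  congr 1; ext r; ring

/-- There is a constant `C ≥ 0` such that for every absolutely continuous `f : [-1,0] → ℂ`
with derivative `f' ∈ L²(-1,0)`, every `g ∈ L²(-1,0)`, every real `s ≠ 0` and every
`ξ ∈ [-1,0]`, one has
`|∫_{-1}^{ξ} cos(s(ξ−r))·(i·s·f(r) + g(r)) dr| ≤ C·‖f‖_{H¹} + ‖g‖_{L²(-1,0)}`. -/
theorem cosine_convolution_estimate :
    ∃ C : ℝ, 0 ≤ C ∧ ∀ f f' g : ℝ → ℂ,
      (∀ x ∈ Set.Icc (-1:ℝ) 0, f x = f (-1) + ∫ t in (-1:ℝ)..x, f' t) →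
      MemLp f' 2 (volume.restrict (Set.Ioo (-1:ℝ) 0)) →
      MemLp g 2 (volume.restrict (Set.Ioo (-1:ℝ) 0)) →
      ∀ s : ℝ, s ≠ 0 → ∀ ξ ∈ Set.Icc (-1:ℝ) 0,
        ‖∫ r in (-1:ℝ)..ξ, Complex.cos (s * (ξ - r)) * (Complex.I * s * f r + g r)‖ ≤
          C * H1norm f f' + L2norm (-1) 0 g := by
  refine ⟨3, by norm_num, fun f f' g hf hf' hg s _ ξ hξ => ?_⟩
  rw [Measure.restrict_congr_set Ioo_ae_eq_Ioc] at hf' hg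
  have hfi : IntervalIntegrable f volume (-1) ξ :=
    ((continuousOn_of_eq_add_integral hf (hf'.intervalIntegrable (by norm_num))).mono
      (Icc_subset_Icc_right hξ.2)).intervalIntegrable_of_Icc hξ.1
  have hgi := (hg.intervalIntegrable (by norm_num)).mono_set
    (uIcc_subset_uIcc_left (mem_uIcc_of_le hξ.1 hξ.2))
  rw [integral_cos_mul_I_mul_add hfi hgi]
  calc _ ≤ ‖∫ r in (-1 : ℝ)..ξ, s * Complex.cos (s * (ξ - r)) * f r‖ +
        ‖∫ r in (-1 : ℝ)..ξ, Complex.cos (s * (ξ - r)) * g r‖ := by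
        refine (norm_add_le _ _).trans_eq ?_
        rw [norm_mul, Complex.norm_I, one_mul]
    _ ≤ 3 * H1norm f f' + L2norm (-1) 0 g :=
        add_le_add (norm_integral_ofReal_mul_cos_mul_le_H1norm hf hf' s hξ)
          (norm_integral_cos_mul_le_L2norm (by norm_num) hξ hg s)
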